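/- arXiv:2108.13789 — 4 statements merged into one kernel-verified Lean document; each statement's English description precedes it below -/
import Mathlib

section
/- Let θ be a real quadratic irrationality with discriminant Δ. For every norm-positive unit (u+v√Δ)/2 in the quadratic order O_Δ (i.e. u,v ∈ ℤ with u² − Δv² = 4), the matrix Φ((u+v√Δ)/2) := [[(u+bv)/2, −cv],[av, (u−bv)/2]], where (a,b,c) is the type of θ, lies in SL(2,ℤ) and fixes θ under fractional linear transformations. -/
/-!
Write `ε = (u + v√Δ)/2` and `Φ = Φ(ε)`. Since `aθ² - bθ + c = 0`, the vector `(θ, 1)` is an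
eigenvector of `Φ` with eigenvalue `avθ + (u - bv)/2 = ε`, so the Möbius map of `Φ` fixes `θ`.
The eigenvalue is nonzero because its product with the conjugate `(u + bv)/2 - avθ = ε'` is
`det Φ = N(ε) = 1`; integrality of `Φ` is the parity `u ≡ bv (mod 2)` forced by `u² - Δv² = 4`.
-/

theorem Int.even_add_mul_of_sq_sub_mul_sq_eq_four {a b c u v : ℤ}
    (huv : u ^ 2 - (b ^ 2 - 4 * a * c) * v ^ 2 = 4) :
    Even (u + b * v) := by
  have hsq : (u + b * v) ^ 2 = 2 * (2 + b ^ 2 * v ^ 2 - 2 * a * c * v ^ 2 + u * b * v) := by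
    linear_combination huv
  exact (Int.even_pow.mp (hsq ▸ even_two_mul _)).1

/-- The matrix `Φ((u + v√Δ)/2)`; the integer divisions are exact once `u + bv` is even. -/
def unitMatrix (a b c u v : ℤ) : Matrix (Fin 2) (Fin 2) ℤ :=
  !![(u + b * v) / 2, -(c * v); a * v, (u - b * v) / 2]

namespace unitMatrix

variable {a b c u v : ℤ}

@[simp] theorem apply_zero_one : unitMatrix a b c u v 0 1 = -(c * v) := rfl

@[simp] theorem apply_one_zero : unitMatrix a b c u v 1 0 = a * v := rfl

theorem two_mul_zero_zero (hev : Even (u + b * v)) :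
    2 * unitMatrix a b c u v 0 0 = u + b * v :=
  Int.mul_ediv_cancel' hev.two_dvd

theorem two_mul_one_one (hev : Even (u + b * v)) :
    2 * unitMatrix a b c u v 1 1 = u - b * v := by
  have hev' : Even (u - b * v) := by
    rw [show u - b * v = u + b * v - 2 * (b * v) by ring]
    exact hev.sub (even_two_mul _)
  exact Int.mul_ediv_cancel' hev'.two_dvd

theorem zero_zero_sub_one_one (hev : Even (u + b * v)) :
    unitMatrix a b c u v 0 0 - unitMatrix a b c u v 1 1 = b * v := by
  have h₀ := two_mul_zero_zero (a := a) (c := c) hev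
  have h₁ := two_mul_one_one (a := a) (c := c) hev
  omega

theorem det_eq_one (hev : Even (u + b * v)) (huv : u ^ 2 - (b ^ 2 - 4 * a * c) * v ^ 2 = 4) :
    (unitMatrix a b c u v).det = 1 := by
  have h₀ := two_mul_zero_zero (a := a) (c := c) hev
  have h₁ := two_mul_one_one (a := a) (c := c) hev
  have h4 : 4 * (unitMatrix a b c u v).det = 4 * 1 := by
    rw [Matrix.det_fin_two, apply_zero_one, apply_one_zero]
    linear_combination 2 * unitMatrix a b c u v 1 1 * h₀ + (u + b * v) * h₁ + huv
  omega

variable {R : Type*} [CommRing R] {θ : R}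

theorem numerator_eq_mul_denominator (hev : Even (u + b * v)) (hroot : a * θ ^ 2 - b * θ + c = 0) :
    (unitMatrix a b c u v 0 0 : R) * θ + (unitMatrix a b c u v 0 1 : R) =
      θ * ((unitMatrix a b c u v 1 0 : R) * θ + (unitMatrix a b c u v 1 1 : R)) := by
  have hdiff := congrArg (Int.cast (R := R)) (zero_zero_sub_one_one (a := a) (c := c) hev)
  push_cast [apply_zero_one, apply_one_zero] at hdiff ⊢
  linear_combination θ * hdiff - (v : R) * hroot

theorem eigenvalue_mul_conj (hev : Even (u + b * v))
    (huv : u ^ 2 - (b ^ 2 - 4 * a * c) * v ^ 2 = 4) (hroot : a * θ ^ 2 - b * θ + c = 0) :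
    ((unitMatrix a b c u v 1 0 : R) * θ + unitMatrix a b c u v 1 1) *
      (unitMatrix a b c u v 0 0 - unitMatrix a b c u v 1 0 * θ) = 1 := by
  have hdiff := congrArg (Int.cast (R := R)) (zero_zero_sub_one_one (a := a) (c := c) hev)
  have hdet := congrArg (Int.cast (R := R)) (det_eq_one hev huv)
  rw [Matrix.det_fin_two, apply_zero_one, apply_one_zero] at hdet
  push_cast [apply_one_zero] at hdiff hdet ⊢
  linear_combination hdet + (a * v : R) * θ * hdiff - (a * v ^ 2 : R) * hroot

end unitMatrix

theorem quadratic_root_of_eq_add_sqrt_div {a b c : ℝ} (ha : a ≠ 0)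
    (hΔ : 0 ≤ b ^ 2 - 4 * a * c) {θ : ℝ} (hθ : θ = (b + √(b ^ 2 - 4 * a * c)) / (2 * a)) :
    a * θ ^ 2 - b * θ + c = 0 := by
  have hdiscrim : discrim a (-b) c = √(b ^ 2 - 4 * a * c) * √(b ^ 2 - 4 * a * c) := by
    rw [Real.mul_self_sqrt hΔ, discrim]
    ring
  have h := (quadratic_eq_zero_iff ha hdiscrim θ).mpr (Or.inl (by rw [neg_neg, hθ]))
  linear_combination h

theorem stmt0_general (θ : ℝ) (a b c Δ : ℤ)
    (ha : a ≠ 0)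
    (hΔ : Δ = b ^ 2 - 4 * a * c)
    (hΔpos : 0 < Δ)
    (hθ : θ = ((b : ℝ) + Real.sqrt (Δ : ℝ)) / (2 * (a : ℝ)))
    (u v : ℤ) (huv : u ^ 2 - Δ * v ^ 2 = 4) :
    ∃ M : Matrix (Fin 2) (Fin 2) ℤ,
      2 * M 0 0 = u + b * v ∧
      M 0 1 = -(c * v) ∧
      M 1 0 = a * v ∧
      2 * M 1 1 = u - b * v ∧
      M.det = 1 ∧
      ((M 0 0 : ℝ) * θ + (M 0 1 : ℝ)) / ((M 1 0 : ℝ) * θ + (M 1 1 : ℝ)) = θ := by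
  subst hΔ
  have hroot : (a : ℝ) * θ ^ 2 - b * θ + c = 0 := by
    refine quadratic_root_of_eq_add_sqrt_div (Int.cast_ne_zero.mpr ha) ?_ ?_
    · exact_mod_cast hΔpos.le
    · simpa using hθ
  have hev := Int.even_add_mul_of_sq_sub_mul_sq_eq_four huv
  refine ⟨unitMatrix a b c u v, unitMatrix.two_mul_zero_zero hev, unitMatrix.apply_zero_one,
    unitMatrix.apply_one_zero, unitMatrix.two_mul_one_one hev, unitMatrix.det_eq_one hev huv, ?_⟩
  have hden := left_ne_zero_of_mul_eq_one (unitMatrix.eigenvalue_mul_conj hev huv hroot)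
  rw [unitMatrix.numerator_eq_mul_denominator hev hroot, mul_div_cancel_right₀ _ hden]

/-- Let `θ` be a real quadratic irrationality of type `(a,b,c)` (the unique
coprime triple with `a ≠ 0`, `θ = (b + √Δ)/(2a)` and `Δ := b² - 4ac` positive and not a
square).  For every norm-positive unit `(u + v√Δ)/2` of the quadratic order `O_Δ`
(i.e. `u, v : ℤ` with `u² - Δv² = 4`), the matrix
`Φ((u+v√Δ)/2) = [[(u+bv)/2, -cv], [av, (u-bv)/2]]` has integer entries, lies in `SL(2,ℤ)`,
and fixes `θ` under fractional linear transformations. -/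
theorem stmt0 (θ : ℝ) (a b c Δ : ℤ)
    (hirr : Irrational θ)
    (ha : a ≠ 0)
    (hcop : Int.gcd a (Int.gcd b c) = 1)
    (hΔ : Δ = b ^ 2 - 4 * a * c)
    (hΔsq : ¬ IsSquare Δ)
    (hΔpos : 0 < Δ)
    (hθ : θ = ((b : ℝ) + Real.sqrt (Δ : ℝ)) / (2 * (a : ℝ)))
    (u v : ℤ) (huv : u ^ 2 - Δ * v ^ 2 = 4) :
    ∃ M : Matrix (Fin 2) (Fin 2) ℤ,
      2 * M 0 0 = u + b * v ∧
      M 0 1 = -(c * v) ∧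
      M 1 0 = a * v ∧
      2 * M 1 1 = u - b * v ∧
      M.det = 1 ∧
      ((M 0 0 : ℝ) * θ + (M 0 1 : ℝ)) / ((M 1 0 : ℝ) * θ + (M 1 1 : ℝ)) = θ :=
  stmt0_general θ a b c Δ ha hΔ hΔpos hθ u v huv
end

section
/- Let θ be a real quadratic irrationality with discriminant Δ. The map Φ from the group of norm-positive units of O_Δ to the stabilizer SL(2,ℤ)_θ of θ in SL(2,ℤ), defined by Φ((u+v√Δ)/2) = [[(u+bv)/2, −cv],[av, (u−bv)/2]], is a group isomorphism whose inverse sends g ∈ SL(2,ℤ)_θ to g₂₁θ + g₂₂, and Φ(−1) = −I. -/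
/-- `x` is a norm-positive unit of the quadratic order of discriminant `Δ`:
`x = (u + v√Δ)/2` with `u, v : ℤ` and `u² - Δv² = 4`. -/
def IsNormPosUnit (Δ : ℤ) (x : ℝ) : Prop :=
  ∃ u v : ℤ, u ^ 2 - Δ * v ^ 2 = 4 ∧ x = ((u : ℝ) + (v : ℝ) * Real.sqrt (Δ : ℝ)) / 2

/-- `g ∈ SL(2,ℤ)` fixes `θ` under fractional linear transformations. -/
def FixesFLT (θ : ℝ) (g : Matrix.SpecialLinearGroup (Fin 2) ℤ) : Prop :=
  ((g.1 0 0 : ℝ) * θ + (g.1 0 1 : ℝ)) / ((g.1 1 0 : ℝ) * θ + (g.1 1 1 : ℝ)) = θ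

lemma lin_indep {θ : ℝ} (hirr : Irrational θ) {m n : ℤ} (h : (m:ℝ)*θ + n = 0) :
    m = 0 ∧ n = 0 := by
  by_cases hm : m = 0
  · subst hm; simp at h; exact ⟨rfl, by exact_mod_cast h⟩
  · exfalso
    apply hirr
    refine ⟨(-n)/m, ?_⟩
    have hmR : (m:ℝ) ≠ 0 := Int.cast_ne_zero.mpr hm
    push_cast
    field_simp
    linarith

lemma denom_ne {θ : ℝ} (hirr : Irrational θ) {g : Matrix.SpecialLinearGroup (Fin 2) ℤ}
    (hg : FixesFLT θ g) : (g.1 1 0 : ℝ) * θ + (g.1 1 1 : ℝ) ≠ 0 := by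
  intro h0
  unfold FixesFLT at hg
  rw [h0, div_zero] at hg
  exact hirr ⟨0, by simp [hg]⟩

lemma num_eq {θ : ℝ} (hirr : Irrational θ) {g : Matrix.SpecialLinearGroup (Fin 2) ℤ}
    (hg : FixesFLT θ g) :
    (g.1 0 0 : ℝ) * θ + (g.1 0 1 : ℝ) = θ * ((g.1 1 0 : ℝ) * θ + (g.1 1 1 : ℝ)) :=
  (div_eq_iff (denom_ne hirr hg)).mp hg

lemma fix_rel {θ : ℝ} {a b c : ℤ} (hirr : Irrational θ)
    (hθq : (a:ℝ) * θ^2 = (b:ℝ) * θ - (c:ℝ))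
    {g : Matrix.SpecialLinearGroup (Fin 2) ℤ} (hg : FixesFLT θ g) :
    a * g.1 0 0 = b * g.1 1 0 + a * g.1 1 1 ∧ a * g.1 0 1 = -(c * g.1 1 0) := by
  have hE := num_eq hirr hg
  have key : ((a * g.1 0 0 - b * g.1 1 0 - a * g.1 1 1 : ℤ) : ℝ) * θ
      + ((a * g.1 0 1 + c * g.1 1 0 : ℤ) : ℝ) = 0 := by
    push_cast
    linear_combination (a:ℝ) * hE + (g.1 1 0 : ℝ) * hθq
  obtain ⟨h1, h2⟩ := lin_indep hirr key
  constructor <;> omega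

lemma unit_of_fix {θ : ℝ} {a b c Δ : ℤ} (hirr : Irrational θ) (ha : a ≠ 0)
    (hcop : Int.gcd a (Int.gcd b c) = 1)
    (hΔ : Δ = b ^ 2 - 4 * a * c)
    (hθq : (a:ℝ) * θ^2 = (b:ℝ) * θ - (c:ℝ))
    (hθ' : 2*(a:ℝ)*θ = (b:ℝ) + Real.sqrt (Δ:ℝ))
    {g : Matrix.SpecialLinearGroup (Fin 2) ℤ} (hg : FixesFLT θ g) :
    IsNormPosUnit Δ ((g.1 1 0 : ℝ) * θ + (g.1 1 1 : ℝ)) := by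
  obtain ⟨rel1, rel2⟩ := fix_rel hirr hθq hg
  set p := g.1 0 0 with hp'
  set q := g.1 0 1
  set r := g.1 1 0
  set s := g.1 1 1
  -- a ∣ r
  have hab : a ∣ b * r := ⟨p - s, by linarith [rel1]⟩
  have hac : a ∣ c * r := ⟨-q, by linarith [rel2]⟩
  have hgcd : a ∣ r * (Int.gcd b c : ℤ) := by
    rw [Int.gcd_eq_gcd_ab b c]
    have : r * (b * Int.gcdA b c + c * Int.gcdB b c)
        = (b * r) * Int.gcdA b c + (c * r) * Int.gcdB b c := by ring
    rw [this]
    exact dvd_add (hab.mul_right _) (hac.mul_right _)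
  have hco : IsCoprime a ((Int.gcd b c : ℤ)) := by
    rw [Int.isCoprime_iff_gcd_eq_one]
    simpa using hcop
  have har : a ∣ r := hco.dvd_of_dvd_mul_right hgcd
  obtain ⟨v, hv⟩ := har
  -- determine q and p
  have hq : q = -(c * v) := by
    have : a * q = a * (-(c*v)) := by rw [rel2, hv]; ring
    exact mul_left_cancel₀ ha this
  have hpe : p = b * v + s := by
    have : a * p = a * (b * v + s) := by rw [rel1, hv]; ring
    exact mul_left_cancel₀ ha this
  have hdet : p * s - q * r = 1 := by
    have := g.2
    rw [Matrix.det_fin_two] at this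
    exact this
  refine ⟨p + s, v, ?_, ?_⟩
  · rw [hpe]
    rw [hpe, hq, hv] at hdet
    linear_combination 4 * hdet - v^2 * hΔ
  · have hvR : (r:ℝ) = a * v := by exact_mod_cast hv
    have hpR : (p:ℝ) = b * v + s := by exact_mod_cast hpe
    rw [hvR]
    push_cast
    linear_combination ((v:ℝ)/2) * hθ' - (1/2) * hpR

lemma udet {a b c Δ u v p s : ℤ} (hΔ : Δ = b^2 - 4*a*c) (huv : u^2 - Δ*v^2 = 4)
    (h2p : 2*p = u + b*v) (h2s : 2*s = u - b*v) :
    (!![p, -(c*v); a*v, s] : Matrix (Fin 2) (Fin 2) ℤ).det = 1 := by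
  rw [Matrix.det_fin_two_of]
  have hu : p + s = u := by omega
  have hbv : p - s = b*v := by omega
  have h4 : 4 * (p * s - -(c*v) * (a*v)) = 4 * 1 := by
    linear_combination huv + v^2 * hΔ + (u+p+s) * hu - (p-s+b*v) * hbv
  omega

lemma build {θ S : ℝ} {a b c Δ u v p s : ℤ} (haR : (a:ℝ) ≠ 0)
    (hθ' : 2*(a:ℝ)*θ = (b:ℝ) + S) (hS2 : S^2 = (Δ:ℝ))
    (hΔ : Δ = b^2 - 4*a*c) (huv : u^2 - Δ*v^2 = 4)
    (h2p : 2*p = u + b*v) (h2s : 2*s = u - b*v)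
    (hdet : (!![p, -(c*v); a*v, s] : Matrix (Fin 2) (Fin 2) ℤ).det = 1) :
    FixesFLT θ ⟨!![p, -(c*v); a*v, s], hdet⟩ ∧
      (((a*v : ℤ):ℝ) * θ + (s:ℝ)) = ((u:ℝ) + (v:ℝ)*S)/2 := by
  have h2pR : 2*(p:ℝ) = u + b*v := by exact_mod_cast h2p
  have h2sR : 2*(s:ℝ) = u - b*v := by exact_mod_cast h2s
  have huvR : (u:ℝ)^2 - Δ*v^2 = 4 := by exact_mod_cast huv
  have hΔR : (Δ:ℝ) = (b:ℝ)^2 - 4*a*c := by exact_mod_cast hΔ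
  have hθq : (a:ℝ) * θ^2 = (b:ℝ)*θ - (c:ℝ) := by
    have h1 : (a:ℝ) * ((a:ℝ)*θ^2) = (a:ℝ) * ((b:ℝ)*θ - c) := by
      linear_combination ((2*(a:ℝ)*θ - b + S)/4) * hθ' + (1/4)*hS2 + (1/4)*hΔR
    exact mul_left_cancel₀ haR h1
  have hD : ((a*v : ℤ):ℝ) * θ + (s:ℝ) = ((u:ℝ) + (v:ℝ)*S)/2 := by
    push_cast
    linear_combination ((v:ℝ)/2) * hθ' + (1/2) * h2sR
  refine ⟨?_, hD⟩
  have hxy : (((u:ℝ) + v*S)/2) * (((u:ℝ) - v*S)/2) = 1 := by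
    linear_combination (1/4) * huvR - ((v:ℝ)^2/4) * hS2
  have hDne : ((a*v : ℤ):ℝ) * θ + (s:ℝ) ≠ 0 := by
    rw [hD]; exact left_ne_zero_of_mul_eq_one hxy
  unfold FixesFLT
  have e00 : (!![p, -(c*v); a*v, s] : Matrix (Fin 2) (Fin 2) ℤ) 0 0 = p := rfl
  have e01 : (!![p, -(c*v); a*v, s] : Matrix (Fin 2) (Fin 2) ℤ) 0 1 = -(c*v) := rfl
  have e10 : (!![p, -(c*v); a*v, s] : Matrix (Fin 2) (Fin 2) ℤ) 1 0 = a*v := rfl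
  have e11 : (!![p, -(c*v); a*v, s] : Matrix (Fin 2) (Fin 2) ℤ) 1 1 = s := rfl
  show ((p:ℝ)*θ + ((-(c*v) : ℤ):ℝ)) / (((a*v:ℤ):ℝ)*θ + (s:ℝ)) = θ
  push_cast at hDne ⊢
  rw [div_eq_iff hDne]
  linear_combination (-(v:ℝ)) * hθq + (θ/2) * h2pR - (θ/2) * h2sR

lemma fix_mul {θ : ℝ} (hirr : Irrational θ) {g₁ g₂ : Matrix.SpecialLinearGroup (Fin 2) ℤ}
    (h₁ : FixesFLT θ g₁) (h₂ : FixesFLT θ g₂) :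
    FixesFLT θ (g₁ * g₂) ∧
    (((g₁*g₂).1 1 0 : ℝ) * θ + ((g₁*g₂).1 1 1 : ℝ))
      = ((g₁.1 1 0 : ℝ) * θ + g₁.1 1 1) * ((g₂.1 1 0 : ℝ) * θ + g₂.1 1 1) := by
  have d1 := denom_ne hirr h₁
  have d2 := denom_ne hirr h₂
  have n1 := num_eq hirr h₁
  have n2 := num_eq hirr h₂
  have hden : (((g₁*g₂).1 1 0 : ℝ) * θ + ((g₁*g₂).1 1 1 : ℝ))
      = ((g₁.1 1 0 : ℝ) * θ + g₁.1 1 1) * ((g₂.1 1 0 : ℝ) * θ + g₂.1 1 1) := by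
    simp only [Matrix.SpecialLinearGroup.coe_mul, Matrix.mul_apply, Fin.sum_univ_two]
    push_cast
    linear_combination (g₁.1 1 0 : ℝ) * n2
  refine ⟨?_, hden⟩
  unfold FixesFLT
  rw [hden, div_eq_iff (mul_ne_zero d1 d2)]
  have hnum : (((g₁*g₂).1 0 0 : ℝ) * θ + ((g₁*g₂).1 0 1 : ℝ))
      = ((g₁.1 0 0 : ℝ) * θ + g₁.1 0 1) * ((g₂.1 1 0 : ℝ) * θ + g₂.1 1 1) := by
    simp only [Matrix.SpecialLinearGroup.coe_mul, Matrix.mul_apply, Fin.sum_univ_two]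
    push_cast
    linear_combination (g₁.1 0 0 : ℝ) * n2
  rw [hnum, n1]
  ring

/-- Let `θ` be a real quadratic irrationality of type `(a,b,c)` with
discriminant `Δ = b² - 4ac`.  There is a bijection `Φ` from the norm-positive units of
`O_Δ` onto the stabilizer `SL(2,ℤ)_θ` of `θ`, which is a group isomorphism
(multiplicative), is given by `Φ((u+v√Δ)/2) = [[(u+bv)/2, -cv],[av,(u-bv)/2]]`, whose
inverse sends `g` to `g 1 0 * θ + g 1 1`, and which satisfies `Φ(-1) = -I`. -/
theorem stmt1 (θ : ℝ) (a b c Δ : ℤ)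
    (hirr : Irrational θ)
    (ha : a ≠ 0)
    (hcop : Int.gcd a (Int.gcd b c) = 1)
    (hΔ : Δ = b ^ 2 - 4 * a * c)
    (hΔsq : ¬ IsSquare Δ)
    (hΔpos : 0 < Δ)
    (hθ : θ = ((b : ℝ) + Real.sqrt (Δ : ℝ)) / (2 * (a : ℝ))) :
    ∃ Φ : {x : ℝ // IsNormPosUnit Δ x} ≃ {g : Matrix.SpecialLinearGroup (Fin 2) ℤ // FixesFLT θ g},
      (∀ (x y : {x : ℝ // IsNormPosUnit Δ x}) (hxy : IsNormPosUnit Δ (x.1 * y.1)),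
        (Φ ⟨x.1 * y.1, hxy⟩).1 = (Φ x).1 * (Φ y).1) ∧
      (∀ (u v : ℤ) (huv : u ^ 2 - Δ * v ^ 2 = 4),
        2 * ((Φ ⟨((u : ℝ) + (v : ℝ) * Real.sqrt (Δ : ℝ)) / 2, ⟨u, v, huv, rfl⟩⟩).1.1 0 0)
            = u + b * v ∧
        (Φ ⟨((u : ℝ) + (v : ℝ) * Real.sqrt (Δ : ℝ)) / 2, ⟨u, v, huv, rfl⟩⟩).1.1 0 1
            = -(c * v) ∧
        (Φ ⟨((u : ℝ) + (v : ℝ) * Real.sqrt (Δ : ℝ)) / 2, ⟨u, v, huv, rfl⟩⟩).1.1 1 0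
            = a * v ∧
        2 * ((Φ ⟨((u : ℝ) + (v : ℝ) * Real.sqrt (Δ : ℝ)) / 2, ⟨u, v, huv, rfl⟩⟩).1.1 1 1)
            = u - b * v) ∧
      (∀ g : {g : Matrix.SpecialLinearGroup (Fin 2) ℤ // FixesFLT θ g},
        ((Φ.symm g : {x : ℝ // IsNormPosUnit Δ x}) : ℝ) = (g.1.1 1 0 : ℝ) * θ + (g.1.1 1 1 : ℝ)) ∧
      (∀ h : IsNormPosUnit Δ (-1 : ℝ),
        (Φ ⟨(-1 : ℝ), h⟩).1.1 = (-1 : Matrix (Fin 2) (Fin 2) ℤ)) := by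
  
  have haR : (a:ℝ) ≠ 0 := Int.cast_ne_zero.mpr ha
  have hΔR : (0:ℝ) ≤ (Δ:ℝ) := by exact_mod_cast hΔpos.le
  have hS2 : (Real.sqrt (Δ:ℝ))^2 = (Δ:ℝ) := Real.sq_sqrt hΔR
  have hθ' : 2*(a:ℝ)*θ = (b:ℝ) + Real.sqrt (Δ:ℝ) := by
    rw [hθ]; field_simp
  have hΔRR : (Δ:ℝ) = (b:ℝ)^2 - 4*a*c := by exact_mod_cast hΔ
  have hθq : (a:ℝ) * θ^2 = (b:ℝ)*θ - (c:ℝ) := by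
    have h1 : (a:ℝ) * ((a:ℝ)*θ^2) = (a:ℝ) * ((b:ℝ)*θ - c) := by
      linear_combination ((2*(a:ℝ)*θ - b + Real.sqrt (Δ:ℝ))/4) * hθ' + (1/4)*hS2 + (1/4)*hΔRR
    exact mul_left_cancel₀ haR h1
  -- the inverse map
  let f : {g : Matrix.SpecialLinearGroup (Fin 2) ℤ // FixesFLT θ g} → {x : ℝ // IsNormPosUnit Δ x} :=
    fun g => ⟨(g.1.1 1 0 : ℝ) * θ + (g.1.1 1 1 : ℝ), unit_of_fix hirr ha hcop hΔ hθq hθ' g.2⟩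
  have hinj : Function.Injective f := by
    intro g g' h
    have hval : (g.1.1 1 0 : ℝ) * θ + (g.1.1 1 1 : ℝ)
        = (g'.1.1 1 0 : ℝ) * θ + (g'.1.1 1 1 : ℝ) := congrArg Subtype.val h
    have key : ((g.1.1 1 0 - g'.1.1 1 0 : ℤ) : ℝ) * θ + ((g.1.1 1 1 - g'.1.1 1 1 : ℤ) : ℝ) = 0 := by
      push_cast; linear_combination hval
    obtain ⟨h1, h2⟩ := lin_indep hirr key
    have hr : g.1.1 1 0 = g'.1.1 1 0 := by omega
    have hs : g.1.1 1 1 = g'.1.1 1 1 := by omega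
    obtain ⟨ra1, ra2⟩ := fix_rel hirr hθq g.2
    obtain ⟨rb1, rb2⟩ := fix_rel hirr hθq g'.2
    have hp : g.1.1 0 0 = g'.1.1 0 0 := by
      apply mul_left_cancel₀ ha
      rw [ra1, rb1, hr, hs]
    have hq : g.1.1 0 1 = g'.1.1 0 1 := by
      apply mul_left_cancel₀ ha
      rw [ra2, rb2, hr]
    apply Subtype.ext
    apply Subtype.ext
    ext i j
    fin_cases i <;> fin_cases j <;> assumption
  have parity : ∀ u v : ℤ, u ^ 2 - Δ * v ^ 2 = 4 → (2 ∣ u + b * v) := by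
    intro u v huv
    by_contra hodd
    have hprod : (u + b*v) * (u - b*v) = 4 * (1 - a*c*v^2) := by
      linear_combination huv + v^2 * hΔ
    have h1 : ((u + b*v) * (u - b*v)) % 2 = 1 :=
      Int.odd_iff.mp (Int.odd_mul.mpr ⟨Int.odd_iff.mpr (by omega), Int.odd_iff.mpr (by omega)⟩)
    rw [hprod] at h1
    omega
  have hsurj : Function.Surjective f := by
    rintro ⟨xv, hx⟩
    obtain ⟨u, v, huv, hxval⟩ := hx
    have hdvd : 2 ∣ u + b * v := parity u v huv
    have hdvd' : 2 ∣ u - b * v := by omega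
    have h2p : 2 * ((u + b*v)/2) = u + b*v := Int.mul_ediv_cancel' hdvd
    have h2s : 2 * ((u - b*v)/2) = u - b*v := Int.mul_ediv_cancel' hdvd'
    have hdet := udet hΔ huv h2p h2s
    obtain ⟨hfix, hval⟩ := build haR hθ' hS2 hΔ huv h2p h2s hdet
    refine ⟨⟨⟨_, hdet⟩, hfix⟩, Subtype.ext ?_⟩
    show ((a*v : ℤ):ℝ) * θ + (((u - b*v)/2 : ℤ):ℝ) = xv
    rw [hval, hxval]
  let e := Equiv.ofBijective f ⟨hinj, hsurj⟩
  refine ⟨e.symm, ?_, ?_, ?_, ?_⟩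
  · -- multiplicativity
    intro x y hxy
    obtain ⟨hfixm, hvalm⟩ := fix_mul hirr (e.symm x).2 (e.symm y).2
    have hxv : ((e.symm x).1.1 1 0 : ℝ) * θ + ((e.symm x).1.1 1 1 : ℝ) = x.1 :=
      congrArg Subtype.val (e.apply_symm_apply x)
    have hyv : ((e.symm y).1.1 1 0 : ℝ) * θ + ((e.symm y).1.1 1 1 : ℝ) = y.1 :=
      congrArg Subtype.val (e.apply_symm_apply y)
    have key : e.symm ⟨x.1 * y.1, hxy⟩ = ⟨(e.symm x).1 * (e.symm y).1, hfixm⟩ := by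
      rw [Equiv.symm_apply_eq]
      apply Subtype.ext
      show x.1 * y.1 = _
      rw [show (e ⟨(e.symm x).1 * (e.symm y).1, hfixm⟩ : {x : ℝ // IsNormPosUnit Δ x}).1
          = (((e.symm x).1 * (e.symm y).1).1 1 0 : ℝ) * θ
            + (((e.symm x).1 * (e.symm y).1).1 1 1 : ℝ) from rfl]
      rw [hvalm, hxv, hyv]
    rw [key]
  · -- explicit formula
    intro u v huv
    have hdvd : 2 ∣ u + b * v := parity u v huv
    have hdvd' : 2 ∣ u - b * v := by omega
    have h2p : 2 * ((u + b*v)/2) = u + b*v := Int.mul_ediv_cancel' hdvd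
    have h2s : 2 * ((u - b*v)/2) = u - b*v := Int.mul_ediv_cancel' hdvd'
    have hdet := udet hΔ huv h2p h2s
    obtain ⟨hfix, hval⟩ := build haR hθ' hS2 hΔ huv h2p h2s hdet
    have key : e.symm ⟨((u : ℝ) + (v : ℝ) * Real.sqrt (Δ : ℝ)) / 2, ⟨u, v, huv, rfl⟩⟩
        = ⟨⟨_, hdet⟩, hfix⟩ := by
      rw [Equiv.symm_apply_eq]
      apply Subtype.ext
      exact hval.symm
    rw [key]
    refine ⟨h2p, rfl, rfl, h2s⟩
  · -- inverse formula
    intro g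
    rfl
  · -- minus one
    intro h
    have hdet : (-1 : Matrix (Fin 2) (Fin 2) ℤ).det = 1 := by
      simp [Matrix.det_fin_two, Matrix.one_apply]
    have e00 : (-1 : Matrix (Fin 2) (Fin 2) ℤ) 0 0 = -1 := by simp
    have e01 : (-1 : Matrix (Fin 2) (Fin 2) ℤ) 0 1 = 0 := by simp [Matrix.one_apply]
    have e10 : (-1 : Matrix (Fin 2) (Fin 2) ℤ) 1 0 = 0 := by simp [Matrix.one_apply]
    have e11 : (-1 : Matrix (Fin 2) (Fin 2) ℤ) 1 1 = -1 := by simp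
    have hfix : FixesFLT θ ⟨-1, hdet⟩ := by
      unfold FixesFLT
      show (((-1 : Matrix (Fin 2) (Fin 2) ℤ) 0 0 : ℝ) * θ + ((-1 : Matrix (Fin 2) (Fin 2) ℤ) 0 1 : ℝ))
          / (((-1 : Matrix (Fin 2) (Fin 2) ℤ) 1 0 : ℝ) * θ + ((-1 : Matrix (Fin 2) (Fin 2) ℤ) 1 1 : ℝ)) = θ
      rw [e00, e01, e10, e11]
      push_cast
      rw [div_eq_iff (by norm_num : (0:ℝ)*θ + (-1) ≠ 0)]
      ring
    have key : e.symm ⟨(-1 : ℝ), h⟩ = ⟨⟨-1, hdet⟩, hfix⟩ := by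
      rw [Equiv.symm_apply_eq]
      apply Subtype.ext
      show (-1 : ℝ) = (((-1 : Matrix (Fin 2) (Fin 2) ℤ) 1 0 : ℝ) * θ + ((-1 : Matrix (Fin 2) (Fin 2) ℤ) 1 1 : ℝ))
      rw [e10, e11]
      push_cast
      ring
    rw [key]
end

section
/- Let H be a Hopf *-algebra, B a right H-module *-algebra, and M a right H-equivariant B-*-bimodule. The set ZS¹_ℓ(H;B,M) of lazy Sweedler 1-cocycles — unitaries σ in the convolution algebra C(H,B) centralizing ρ_B(B)⊕ρ_M(M), with σ(1)=1 and σ(hk) = (σ(h)◁k₍₁₎)σ(k₍₂₎) for all h,k ∈ H — is a group under convolution. -/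
open TensorProduct

section ConvolutionFramework

variable {k : Type*} [CommRing k] [StarRing k]
variable {H : Type*} [Ring H] [HopfAlgebra k H] [StarRing H] [StarModule k H]
variable {B : Type*} [Ring B] [Algebra k B] [StarRing B] [StarModule k B]
variable {M : Type*} [AddCommGroup M] [Module k M] [StarAddMonoid M] [StarModule k M]

/-- The convolution product on `C(H,B) = Hom_k(H,B)`:
`(f ⋆ g)(h) = f(h₍₁₎) g(h₍₂₎)`. -/
noncomputable def conv (f g : H →ₗ[k] B) : H →ₗ[k] B :=
  LinearMap.mul' k B ∘ₗ TensorProduct.map f g ∘ₗ Coalgebra.comul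

/-- The convolution unit `ε(·) 1_B`. -/
noncomputable def convOne : H →ₗ[k] B :=
  Algebra.linearMap k B ∘ₗ Coalgebra.counit

/-- The involution on the convolution bimodule: `f*(h) = (f (S(h)*))*`. -/
noncomputable def convStar (f : H →ₗ[k] M) : H →ₗ[k] M where
  toFun h := star (f (star (HopfAlgebra.antipode (R := k) h)))
  map_add' x y := by simp
  map_smul' r x := by simp [star_smul]

/-- The `star ⊗ star` map on `H ⊗ H` (as an additive map). -/
noncomputable def starTensor : H ⊗[k] H →+ H ⊗[k] H :=
  TensorProduct.liftAddHom
    { toFun := fun x =>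
        { toFun := fun y => star x ⊗ₜ[k] star y
          map_zero' := by simp
          map_add' := fun y₁ y₂ => by simp [star_add, TensorProduct.tmul_add] }
      map_zero' := by ext y; simp
      map_add' := fun x₁ x₂ => by ext y; simp [star_add, TensorProduct.add_tmul] }
    (fun r x y => by
      simp only [AddMonoidHom.coe_mk, ZeroHom.coe_mk, star_smul]
      rw [TensorProduct.smul_tmul])

/-- `H` is a Hopf `*`-algebra: `Δ(h*) = h₍₁₎* ⊗ h₍₂₎*`, `ε(h*) = ε(h)*`, and
`S ∘ * ∘ S ∘ * = id`. -/
def IsHopfStar (k H : Type*) [CommRing k] [StarRing k]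
    [Ring H] [HopfAlgebra k H] [StarRing H] [StarModule k H] : Prop :=
  (∀ h : H, Coalgebra.comul (R := k) (star h) = starTensor (Coalgebra.comul (R := k) h)) ∧
  (∀ h : H, Coalgebra.counit (R := k) (star h) = star (Coalgebra.counit (R := k) h)) ∧
  (∀ h : H, HopfAlgebra.antipode (R := k) (star (HopfAlgebra.antipode (R := k) (star h))) = h)

end ConvolutionFramework

section ModuleAlgebra

/-- A right `H`-module `*`-algebra `B`: a right action `act` of `H` on `B` such that the
multiplication and unit of `B` are `H`-linear in the Hopf sense and the action is
compatible with the `*`-structures. -/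
structure RightHopfModuleStarAlgebra (k H B : Type*) [CommRing k] [StarRing k]
    [Ring H] [HopfAlgebra k H] [StarRing H] [StarModule k H]
    [Ring B] [Algebra k B] [StarRing B] [StarModule k B] where
  act : B →ₗ[k] H →ₗ[k] B
  act_one : ∀ b : B, act b 1 = b
  act_mul : ∀ (b : B) (h h' : H), act b (h * h') = act (act b h) h'
  act_algebra_mul : ∀ b₁ b₂ : B,
    act (b₁ * b₂) = LinearMap.mul' k B ∘ₗ TensorProduct.map (act b₁) (act b₂) ∘ₗ Coalgebra.comul
  act_algebra_one : act 1 = Algebra.linearMap k B ∘ₗ Coalgebra.counit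
  act_star : ∀ (b : B) (h : H),
    star (act b h) = act (star b) (star (HopfAlgebra.antipode (R := k) h))

/-- A right `H`-equivariant `B`-`*`-bimodule `M`: commuting left and right `B`-actions,
a right `H`-action, the `*`-structure compatibilities, and Hopf-equivariance of the
`B`-actions. -/
structure EquivStarBimodule (k H B M : Type*) [CommRing k] [StarRing k]
    [Ring H] [HopfAlgebra k H] [StarRing H] [StarModule k H]
    [Ring B] [Algebra k B] [StarRing B] [StarModule k B]
    [AddCommGroup M] [Module k M] [StarAddMonoid M] [StarModule k M]
    (ρ : RightHopfModuleStarAlgebra k H B) where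
  lact : B →ₗ[k] M →ₗ[k] M
  ract : M →ₗ[k] B →ₗ[k] M
  hact : M →ₗ[k] H →ₗ[k] M
  lact_one : ∀ m : M, lact 1 m = m
  lact_mul : ∀ (b₁ b₂ : B) (m : M), lact (b₁ * b₂) m = lact b₁ (lact b₂ m)
  ract_one : ∀ m : M, ract m 1 = m
  ract_mul : ∀ (m : M) (b₁ b₂ : B), ract m (b₁ * b₂) = ract (ract m b₁) b₂
  middle : ∀ (b₁ : B) (m : M) (b₂ : B), ract (lact b₁ m) b₂ = lact b₁ (ract m b₂)
  star_compat : ∀ (b₁ : B) (m : M) (b₂ : B),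
    star (lact b₁ (ract m b₂)) = lact (star b₂) (ract (star m) (star b₁))
  hact_one : ∀ m : M, hact m 1 = m
  hact_mul : ∀ (m : M) (h h' : H), hact m (h * h') = hact (hact m h) h'
  hact_lact : ∀ (b : B) (m : M), hact (lact b m) =
    TensorProduct.lift lact ∘ₗ TensorProduct.map (ρ.act b) (hact m) ∘ₗ Coalgebra.comul
  hact_ract : ∀ (m : M) (b : B), hact (ract m b) =
    TensorProduct.lift ract ∘ₗ TensorProduct.map (hact m) (ρ.act b) ∘ₗ Coalgebra.comul
  hact_star : ∀ (m : M) (h : H),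
    star (hact m h) = hact (star m) (star (HopfAlgebra.antipode (R := k) h))

variable {k H B M : Type*} [CommRing k] [StarRing k]
  [Ring H] [HopfAlgebra k H] [StarRing H] [StarModule k H]
  [Ring B] [Algebra k B] [StarRing B] [StarModule k B]
  [AddCommGroup M] [Module k M] [StarAddMonoid M] [StarModule k M]
  {ρ : RightHopfModuleStarAlgebra k H B}

/-- The left convolution action of `C(H,B)` on `C(H,M)`: `(f ⋆ μ)(h) = f(h₍₁₎) • μ(h₍₂₎)`. -/
noncomputable def convL (S : EquivStarBimodule k H B M ρ)
    (f : H →ₗ[k] B) (μ : H →ₗ[k] M) : H →ₗ[k] M :=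
  TensorProduct.lift S.lact ∘ₗ TensorProduct.map f μ ∘ₗ Coalgebra.comul

/-- The right convolution action of `C(H,B)` on `C(H,M)`: `(μ ⋆ f)(h) = μ(h₍₁₎) • f(h₍₂₎)`. -/
noncomputable def convR (S : EquivStarBimodule k H B M ρ)
    (μ : H →ₗ[k] M) (f : H →ₗ[k] B) : H →ₗ[k] M :=
  TensorProduct.lift S.ract ∘ₗ TensorProduct.map μ f ∘ₗ Coalgebra.comul

/-- A lazy Sweedler 1-cocycle: a unitary `σ` of `C(H,B)` centralizing
`ρ_B(B) ⊕ ρ_M(M)`, with `σ(1) = 1` and `σ(hk) = (σ(h) ◁ k₍₁₎) σ(k₍₂₎)`. -/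
noncomputable def IsLazySweedlerCocycle (S : EquivStarBimodule k H B M ρ)
    (σ : H →ₗ[k] B) : Prop :=
  conv σ (convStar σ) = convOne ∧
  conv (convStar σ) σ = convOne ∧
  (∀ b : B, conv σ (ρ.act b) = conv (ρ.act b) σ) ∧
  (∀ m : M, convL S σ (S.hact m) = convR S (S.hact m) σ) ∧
  σ 1 = 1 ∧
  (∀ h : H, σ ∘ₗ LinearMap.mulLeft k h =
    LinearMap.mul' k B ∘ₗ TensorProduct.map (ρ.act (σ h)) σ ∘ₗ Coalgebra.comul)

/-- A lazy Hochschild 1-cocycle: a self-adjoint `μ ∈ C(H,M)` centralizing `ρ_B(B)`,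
with `μ(1) = 0` and `μ(hk) = μ(h) ◁ k + ε(h) μ(k)`. -/
noncomputable def IsLazyHochschildCocycle (S : EquivStarBimodule k H B M ρ)
    (μ : H →ₗ[k] M) : Prop :=
  convStar μ = μ ∧
  (∀ b : B, convL S (ρ.act b) μ = convR S μ (ρ.act b)) ∧
  μ 1 = 0 ∧
  (∀ h : H, μ ∘ₗ LinearMap.mulLeft k h = S.hact (μ h) + Coalgebra.counit (R := k) h • μ)

/-- `υ` is a unitary of `Cent_B(B ⊕ M)`: a unitary of `B` commuting with all of `B` and
centralizing `M`. -/
def IsCentralUnitary (S : EquivStarBimodule k H B M ρ) (υ : B) : Prop :=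
  υ * star υ = 1 ∧ star υ * υ = 1 ∧ (∀ b : B, υ * b = b * υ) ∧ ∀ m : M, S.lact υ m = S.ract m υ

/-- The Sweedler coboundary `Dυ(h) := (υ ◁ h) υ*`. -/
noncomputable def sweedlerCobound (ρ : RightHopfModuleStarAlgebra k H B) (υ : B) :
    H →ₗ[k] B :=
  LinearMap.mulRight k (star υ) ∘ₗ ρ.act υ

/-- The Hochschild coboundary `Dm(h) := m ◁ h - ε(h) m`. -/
noncomputable def hochCobound (S : EquivStarBimodule k H B M ρ) (m : M) : H →ₗ[k] M :=
  S.hact m - LinearMap.smulRight (Coalgebra.counit (R := k)) m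

/-- An `H`-equivariant `*`-derivation `der : B → M`. -/
def IsEquivStarDerivation (S : EquivStarBimodule k H B M ρ) (der : B →ₗ[k] M) : Prop :=
  (∀ b₁ b₂ : B, der (b₁ * b₂) = S.ract (der b₁) b₂ + S.lact b₁ (der b₂)) ∧
  (∀ b : B, der (star b) = - star (der b)) ∧
  (∀ (b : B) (h : H), der (ρ.act b h) = S.hact (der b) h)

/-- The Maurer–Cartan cocycle `MC[der](σ)(h) := -derσ(h₍₁₎) • σ*(h₍₂₎)`. -/
noncomputable def mcCocycle (S : EquivStarBimodule k H B M ρ) (der : B →ₗ[k] M)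
    (σ : H →ₗ[k] B) : H →ₗ[k] M :=
  - (TensorProduct.lift S.ract ∘ₗ TensorProduct.map (der ∘ₗ σ) (convStar σ) ∘ₗ Coalgebra.comul)

end ModuleAlgebra

/-!
Convolution makes `C(H,B)` a monoid in which the inverse of a unitary `σ` is `σ*`, so it suffices
that lazy cocycles are closed under `⋆` and `*`. Unitarity is preserved because `*` is
anti-multiplicative on `C(H,B)`, which comes down to `S` being an anti-coalgebra map; the
centralizer conditions are preserved for formal reasons.

The cocycle identity is the equation `Λσ = Rσ` in the convolution algebra `C(H, C(H,B))`, where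
`Λσ h = σ(h ·)` (`compMulLeft`) and `Rσ h = ρ_B(σ h) ⋆ σ` (`sweedlerCocycleMap`). Since `Δ` is
multiplicative, `Λ` is a monoid map, and since `σ` commutes with `ρ_B(B)`, `Rσ ⋆ Rτ = R(σ ⋆ τ)`.
So cocycles are closed under products, and if `τ` is the inverse of a cocycle `σ`, then `Λτ` is a
left and `Rτ` a right inverse of `Λσ = Rσ`, hence `Λτ = Rτ`.
-/

open Coalgebra WithConv HopfAlgebra

section BilinConv

variable {R C X Y Z U V W : Type*} [CommSemiring R] [AddCommMonoid C] [Module R C] [Coalgebra R C]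
  [AddCommMonoid X] [Module R X] [AddCommMonoid Y] [Module R Y] [AddCommMonoid Z] [Module R Z]
  [AddCommMonoid U] [Module R U] [AddCommMonoid V] [Module R V] [AddCommMonoid W] [Module R W]

/-- The product `conv` and the actions `convL`, `convR` are all of this form. -/
noncomputable def bilinConv (p : X →ₗ[R] Y →ₗ[R] Z) (f : C →ₗ[R] X) (g : C →ₗ[R] Y) :
    C →ₗ[R] Z :=
  lift p ∘ₗ map f g ∘ₗ comul

theorem Coalgebra.Repr.bilinConv_apply {c : C} {ι : Type*} (r : Repr R c ι)
    (p : X →ₗ[R] Y →ₗ[R] Z) (f : C →ₗ[R] X) (g : C →ₗ[R] Y) :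
    bilinConv p f g c = ∑ i ∈ r.index, p (f (r.left i)) (g (r.right i)) := by
  simp [bilinConv, ← r.eq]

theorem bilinConv_assoc {p : U →ₗ[R] Z →ₗ[R] V} {q : X →ₗ[R] Y →ₗ[R] U}
    {p' : X →ₗ[R] W →ₗ[R] V} {q' : Y →ₗ[R] Z →ₗ[R] W}
    (h : ∀ x y z, p (q x y) z = p' x (q' y z)) (f : C →ₗ[R] X) (g : C →ₗ[R] Y) (w : C →ₗ[R] Z) :
    bilinConv p (bilinConv q f g) w = bilinConv p' f (bilinConv q' g w) := by
  ext c
  let r := ℛ R c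
  have := congrArg (lift p' ∘ₗ map f (lift q' ∘ₗ map g w))
    (sum_tmul_tmul_eq r (fun i => ℛ R (r.left i)) (fun i => ℛ R (r.right i)))
  simp only [map_sum, LinearMap.comp_apply, TensorProduct.map_tmul, lift.tmul] at this
  simpa only [r.bilinConv_apply, (ℛ R _).bilinConv_apply, map_sum, LinearMap.sum_apply, h]

theorem bilinConv_smulRight_counit_left {p : X →ₗ[R] Y →ₗ[R] Y} {x : X} (hx : p x = .id)
    (g : C →ₗ[R] Y) : bilinConv p (LinearMap.smulRight counit x) g = g := by
  ext c
  rw [(ℛ R c).bilinConv_apply]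
  simp only [LinearMap.smulRight_apply, map_smul, hx, LinearMap.smul_apply, LinearMap.id_apply]
  simp only [← map_smul g, ← map_sum g, sum_counit_smul]

theorem bilinConv_smulRight_counit_right {p : X →ₗ[R] Y →ₗ[R] X} {y : Y}
    (hy : p.flip y = .id) (f : C →ₗ[R] X) : bilinConv p f (LinearMap.smulRight counit y) = f := by
  ext c
  have := congrArg (TensorProduct.rid R C) (sum_tmul_counit_eq (ℛ R c))
  simp only [map_sum, TensorProduct.rid_tmul] at this
  rw [(ℛ R c).bilinConv_apply]
  simp only [LinearMap.smulRight_apply, map_smul, ← LinearMap.flip_apply p, hy,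
    LinearMap.smul_apply, LinearMap.id_apply]
  simp only [← map_smul f, ← map_sum f, this, one_smul]

end BilinConv

section Antipode

variable {R H : Type*} [CommSemiring R] [Semiring H] [HopfAlgebra R H]

open Algebra.TensorProduct in
theorem toConv_comul_eq_includeLeft_mul_includeRight :
    toConv (comul : H →ₗ[R] H ⊗[R] H) =
      toConv (includeLeft : H →ₐ[R] H ⊗[R] H).toLinearMap *
        toConv (includeRight : H →ₐ[R] H ⊗[R] H).toLinearMap := by
  ext h
  simp [(ℛ R h).convMul_apply, ← (ℛ R h).eq]

theorem toConv_algHom_comp_antipode_mul {A : Type*} [Semiring A] [Algebra R A] (f : H →ₐ[R] A) :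
    toConv (f.toLinearMap ∘ₗ antipode R) * toConv f.toLinearMap = 1 := by
  have := LinearMap.algHom_comp_convMul_distrib f (toConv (antipode R)) (toConv .id)
  rw [LinearMap.antipode_mul_id] at this
  ext h
  simpa using congr($this.symm h)

open Algebra.TensorProduct in
/-- Both sides are convolution inverses of `Δ = includeLeft ⋆ includeRight`, on the right and on
the left respectively. -/
theorem toConv_comul_comp_antipode :
    toConv (comul ∘ₗ antipode R : H →ₗ[R] H ⊗[R] H) =
      toConv ((includeRight : H →ₐ[R] H ⊗[R] H).toLinearMap ∘ₗ antipode R) *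
        toConv ((includeLeft : H →ₐ[R] H ⊗[R] H).toLinearMap ∘ₗ antipode R) := by
  refine (left_inv_eq_right_inv (M := WithConv (H →ₗ[R] H ⊗[R] H)) (a := toConv comul) ?_
    LinearMap.comul_right_inv).symm
  rw [toConv_comul_eq_includeLeft_mul_includeRight, mul_assoc,
    ← mul_assoc _ (toConv includeLeft.toLinearMap), toConv_algHom_comp_antipode_mul, one_mul,
    toConv_algHom_comp_antipode_mul]

@[simps]
def Coalgebra.Repr.antipode {a : H} {ι : Type*} (r : Repr R a ι) : Repr R (antipode R a) ι where
  index := r.index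
  left i := HopfAlgebra.antipode R (r.right i)
  right i := HopfAlgebra.antipode R (r.left i)
  eq := by
    simpa [r.convMul_apply] using congr($(toConv_comul_comp_antipode (R := R) (H := H)) a).symm

end Antipode

section CompMulLeft

variable {k H B : Type*} [CommSemiring k] [Semiring H] [HopfAlgebra k H] [Semiring B] [Algebra k B]

variable (k H B) in
noncomputable def compMulLeft :
    WithConv (H →ₗ[k] B) →* WithConv (H →ₗ[k] WithConv (H →ₗ[k] B)) where
  toFun f := toConv ((WithConv.linearEquiv k _).symm.toLinearMap ∘ₗ
    LinearMap.llcomp k H H B f.ofConv ∘ₗ LinearMap.mul k H)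
  map_one' := by
    ext h x
    simp [Bialgebra.counit_mul, Algebra.algebraMap_eq_smul_one, mul_smul]
  map_mul' f g := by
    ext h x
    simp [((ℛ k h).mul (ℛ k x)).convMul_apply, (ℛ k h).convMul_apply, (ℛ k x).convMul_apply,
      Finset.sum_product]

end CompMulLeft

section Convolution

variable {k H B : Type*} [CommRing k] [Ring H] [HopfAlgebra k H] [Ring B] [Algebra k B]

theorem toConv_conv (f g : H →ₗ[k] B) : toConv (conv f g) = toConv f * toConv g := rfl

theorem toConv_convOne : toConv (convOne : H →ₗ[k] B) = 1 := rfl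

theorem convOne_eq_smulRight : (convOne : H →ₗ[k] B) = LinearMap.smulRight counit 1 := by
  ext h
  simp [convOne, Algebra.algebraMap_eq_smul_one]

theorem Coalgebra.Repr.conv_apply {h : H} {ι : Type*} (r : Repr k h ι) (f g : H →ₗ[k] B) :
    conv f g h = ∑ i ∈ r.index, f (r.left i) * g (r.right i) :=
  r.convMul_apply (toConv f) (toConv g)

theorem conv_assoc (f g w : H →ₗ[k] B) : conv (conv f g) w = conv f (conv g w) :=
  congrArg ofConv (mul_assoc (toConv f) (toConv g) (toConv w))

theorem conv_apply_one (f g : H →ₗ[k] B) : conv f g 1 = f 1 * g 1 := by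
  simp [conv, Algebra.TensorProduct.one_def]

end Convolution

section ConvStar

variable {k : Type*} [CommRing k] [StarRing k]
variable {H : Type*} [Ring H] [HopfAlgebra k H] [StarRing H] [StarModule k H]
variable {B : Type*} [Ring B] [Algebra k B] [StarRing B] [StarModule k B]
variable {M : Type*} [AddCommGroup M] [Module k M] [StarAddMonoid M] [StarModule k M]

theorem convStar_apply (f : H →ₗ[k] M) (h : H) :
    convStar f h = star (f (star (antipode k h))) := rfl

def Coalgebra.Repr.star (hH : IsHopfStar k H) {a : H} {ι : Type*} (r : Repr k a ι) :
    Repr k (star a) ι where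
  index := r.index
  left i := Star.star (r.left i)
  right i := Star.star (r.right i)
  eq := by simp [hH.1, ← r.eq, starTensor]

theorem star_antipode_star_antipode (hH : IsHopfStar k H) (h : H) :
    star (antipode k (star (antipode k h))) = h := by
  simpa using congrArg star (hH.2.2 (star h))

theorem convStar_convStar (hH : IsHopfStar k H) (f : H →ₗ[k] M) : convStar (convStar f) = f := by
  ext h
  simp [convStar_apply, star_antipode_star_antipode hH]

theorem convStar_conv (hH : IsHopfStar k H) (f g : H →ₗ[k] B) :
    convStar (conv f g) = conv (convStar g) (convStar f) := by
  ext h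
  rw [convStar_apply, ((ℛ k h).antipode.star hH).conv_apply, (ℛ k h).conv_apply]
  simp [star_sum, Coalgebra.Repr.star, convStar_apply]

theorem convStar_convOne (hH : IsHopfStar k H) : convStar (convOne : H →ₗ[k] B) = convOne := by
  ext h
  simp [convStar_apply, convOne, hH.2.1, algebraMap_star_comm]

end ConvStar

section Bimodule

variable {k : Type*} [CommRing k] [StarRing k]
variable {H : Type*} [Ring H] [HopfAlgebra k H] [StarRing H] [StarModule k H]
variable {B : Type*} [Ring B] [Algebra k B] [StarRing B] [StarModule k B]
variable {M : Type*} [AddCommGroup M] [Module k M] [StarAddMonoid M] [StarModule k M]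
variable {ρ : RightHopfModuleStarAlgebra k H B} (S : EquivStarBimodule k H B M ρ)

theorem convL_conv (f g : H →ₗ[k] B) (μ : H →ₗ[k] M) :
    convL S (conv f g) μ = convL S f (convL S g μ) :=
  bilinConv_assoc S.lact_mul f g μ

theorem convR_conv (f g : H →ₗ[k] B) (μ : H →ₗ[k] M) :
    convR S μ (conv f g) = convR S (convR S μ f) g :=
  (bilinConv_assoc (fun m b₁ b₂ => (S.ract_mul m b₁ b₂).symm) μ f g).symm

theorem convR_convL (f g : H →ₗ[k] B) (μ : H →ₗ[k] M) :
    convR S (convL S f μ) g = convL S f (convR S μ g) :=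
  bilinConv_assoc S.middle f μ g

theorem convL_convOne (μ : H →ₗ[k] M) : convL S convOne μ = μ := by
  rw [convOne_eq_smulRight]
  exact bilinConv_smulRight_counit_left (LinearMap.ext S.lact_one) μ

theorem convR_convOne (μ : H →ₗ[k] M) : convR S μ convOne = μ := by
  rw [convOne_eq_smulRight]
  exact bilinConv_smulRight_counit_right (LinearMap.ext S.ract_one) μ

variable {S}

theorem convL_conv_eq_convR_conv {σ τ : H →ₗ[k] B} {μ : H →ₗ[k] M}
    (hσ : convL S σ μ = convR S μ σ) (hτ : convL S τ μ = convR S μ τ) :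
    convL S (conv σ τ) μ = convR S μ (conv σ τ) := by
  rw [convL_conv, hτ, ← convR_convL, hσ, convR_conv]

theorem convL_eq_convR_of_conv_eq_convOne {σ τ : H →ₗ[k] B} {μ : H →ₗ[k] M}
    (hστ : conv σ τ = convOne) (hτσ : conv τ σ = convOne) (hσ : convL S σ μ = convR S μ σ) :
    convL S τ μ = convR S μ τ :=
  calc convL S τ μ = convR S (convL S τ μ) (conv σ τ) := by rw [hστ, convR_convOne]
    _ = convR S (convL S (conv τ σ) μ) τ := by rw [convR_conv, convR_convL, ← hσ, ← convL_conv]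
    _ = convR S μ τ := by rw [hτσ, convL_convOne]

end Bimodule

section SweedlerCocycle

variable {k : Type*} [CommRing k] [StarRing k]
variable {H : Type*} [Ring H] [HopfAlgebra k H] [StarRing H] [StarModule k H]
variable {B : Type*} [Ring B] [Algebra k B] [StarRing B] [StarModule k B]
variable {M : Type*} [AddCommGroup M] [Module k M] [StarAddMonoid M] [StarModule k M]
variable {ρ : RightHopfModuleStarAlgebra k H B}

variable (ρ) in
/-- The map `ρ_B`. -/
noncomputable def RightHopfModuleStarAlgebra.actConv : B →ₐ[k] WithConv (H →ₗ[k] B) :=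
  .ofLinearMap ((WithConv.linearEquiv k _).symm.toLinearMap ∘ₗ ρ.act)
    (congrArg toConv ρ.act_algebra_one) (fun b₁ b₂ => congrArg toConv (ρ.act_algebra_mul b₁ b₂))

variable (ρ) in
noncomputable def sweedlerCocycleMap (σ : WithConv (H →ₗ[k] B)) :
    WithConv (H →ₗ[k] WithConv (H →ₗ[k] B)) :=
  toConv (LinearMap.mulRight k σ ∘ₗ ρ.actConv.toLinearMap ∘ₗ σ.ofConv)

theorem sweedlerCocycleMap_apply (σ : WithConv (H →ₗ[k] B)) (h : H) :
    sweedlerCocycleMap ρ σ h = ρ.actConv (σ h) * σ := rfl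

theorem sweedlerCocycleMap_one : sweedlerCocycleMap ρ 1 = 1 := by
  ext h : 2
  simp [sweedlerCocycleMap_apply, Algebra.algebraMap_eq_smul_one]

theorem sweedlerCocycleMap_mul {σ : WithConv (H →ₗ[k] B)} (hσ : ∀ b, Commute σ (ρ.actConv b))
    (τ : WithConv (H →ₗ[k] B)) :
    sweedlerCocycleMap ρ σ * sweedlerCocycleMap ρ τ = sweedlerCocycleMap ρ (σ * τ) := by
  ext h : 2
  simp only [(ℛ k h).convMul_apply, sweedlerCocycleMap_apply, map_sum, map_mul, Finset.sum_mul]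
  refine Finset.sum_congr rfl fun i _ => ?_
  rw [mul_assoc, ← mul_assoc σ, (hσ _).eq, mul_assoc, mul_assoc]

theorem compMulLeft_eq_sweedlerCocycleMap_mul {σ τ : WithConv (H →ₗ[k] B)}
    (hσB : ∀ b, Commute σ (ρ.actConv b)) (hσ : compMulLeft k H B σ = sweedlerCocycleMap ρ σ)
    (hτ : compMulLeft k H B τ = sweedlerCocycleMap ρ τ) :
    compMulLeft k H B (σ * τ) = sweedlerCocycleMap ρ (σ * τ) := by
  rw [map_mul, hσ, hτ, sweedlerCocycleMap_mul hσB]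

theorem compMulLeft_eq_sweedlerCocycleMap_of_mul_eq_one {σ τ : WithConv (H →ₗ[k] B)}
    (hσB : ∀ b, Commute σ (ρ.actConv b)) (hσ : compMulLeft k H B σ = sweedlerCocycleMap ρ σ)
    (hστ : σ * τ = 1) (hτσ : τ * σ = 1) :
    compMulLeft k H B τ = sweedlerCocycleMap ρ τ :=
  left_inv_eq_right_inv (a := compMulLeft k H B σ) (by rw [← map_mul, hτσ, map_one])
    (by rw [hσ, sweedlerCocycleMap_mul hσB, hστ, sweedlerCocycleMap_one])

theorem isLazySweedlerCocycle_iff (S : EquivStarBimodule k H B M ρ) (σ : H →ₗ[k] B) :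
    IsLazySweedlerCocycle S σ ↔
      toConv σ * toConv (convStar σ) = 1 ∧ toConv (convStar σ) * toConv σ = 1 ∧
      (∀ b, Commute (toConv σ) (ρ.actConv b)) ∧
      (∀ m, convL S σ (S.hact m) = convR S (S.hact m) σ) ∧ σ 1 = 1 ∧
      compMulLeft k H B (toConv σ) = sweedlerCocycleMap ρ (toConv σ) := by
  have hcocycle : (∀ h, σ ∘ₗ LinearMap.mulLeft k h = conv (ρ.act (σ h)) σ) ↔
      compMulLeft k H B (toConv σ) = sweedlerCocycleMap ρ (toConv σ) :=
    ⟨fun hσ => WithConv.ext (LinearMap.ext fun h => congrArg toConv (hσ h)),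
      fun hσ h => congrArg ofConv (LinearMap.congr_fun (congrArg ofConv hσ) h)⟩
  rw [← hcocycle]
  exact and_congr toConv_injective.eq_iff.symm <| and_congr toConv_injective.eq_iff.symm <|
    and_congr (forall_congr' fun b => toConv_injective.eq_iff.symm) Iff.rfl

variable {S : EquivStarBimodule k H B M ρ}

theorem isLazySweedlerCocycle_convOne (hH : IsHopfStar k H) : IsLazySweedlerCocycle S convOne := by
  rw [isLazySweedlerCocycle_iff, convStar_convOne hH, toConv_convOne, map_one (compMulLeft k H B),
    sweedlerCocycleMap_one]
  exact ⟨one_mul 1, one_mul 1, fun _ => Commute.one_left _,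
    fun m => by rw [convL_convOne, convR_convOne], by simp [convOne], rfl⟩

theorem IsLazySweedlerCocycle.conv (hH : IsHopfStar k H) {σ τ : H →ₗ[k] B}
    (hσ : IsLazySweedlerCocycle S σ) (hτ : IsLazySweedlerCocycle S τ) :
    IsLazySweedlerCocycle S (conv σ τ) := by
  rw [isLazySweedlerCocycle_iff] at hσ hτ ⊢
  obtain ⟨hσσ', hσ'σ, hσB, hσM, hσ1, hσc⟩ := hσ
  obtain ⟨hττ', hτ'τ, hτB, hτM, hτ1, hτc⟩ := hτ
  rw [convStar_conv hH, toConv_conv, toConv_conv]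
  refine ⟨?_, ?_, fun b => (hσB b).mul_left (hτB b),
    fun m => convL_conv_eq_convR_conv (hσM m) (hτM m), by rw [conv_apply_one, hσ1, hτ1, one_mul],
    compMulLeft_eq_sweedlerCocycleMap_mul hσB hσc hτc⟩
  · rw [mul_assoc, ← mul_assoc (toConv τ), hττ', one_mul, hσσ']
  · rw [mul_assoc, ← mul_assoc (toConv (convStar σ)), hσ'σ, one_mul, hτ'τ]

theorem IsLazySweedlerCocycle.convStar (hH : IsHopfStar k H) {σ : H →ₗ[k] B}
    (hσ : IsLazySweedlerCocycle S σ) : IsLazySweedlerCocycle S (convStar σ) := by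
  rw [isLazySweedlerCocycle_iff] at hσ ⊢
  obtain ⟨hσσ', hσ'σ, hσB, hσM, hσ1, hσc⟩ := hσ
  let u : (WithConv (H →ₗ[k] B))ˣ := ⟨_, _, hσσ', hσ'σ⟩
  rw [convStar_convStar hH]
  exact ⟨hσ'σ, hσσ', fun b => (hσB b).units_inv_left (u := u),
    fun m => convL_eq_convR_of_conv_eq_convOne (congrArg ofConv hσσ') (congrArg ofConv hσ'σ)
      (hσM m),
    by rw [convStar_apply, antipode_one, star_one, hσ1, star_one],
    compMulLeft_eq_sweedlerCocycleMap_of_mul_eq_one hσB hσc hσσ' hσ'σ⟩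

end SweedlerCocycle

/-- Let `H` be a Hopf `*`-algebra, `B` a right `H`-module `*`-algebra, and
`M` a right `H`-equivariant `B`-`*`-bimodule.  The set of lazy Sweedler 1-cocycles —
unitaries `σ` of the convolution algebra `C(H,B)` centralizing `ρ_B(B) ⊕ ρ_M(M)`, with
`σ(1) = 1` and `σ(hk) = (σ(h) ◁ k₍₁₎) σ(k₍₂₎)` — is a group under convolution. -/
theorem stmt9 {H B M : Type*}
    [Ring H] [HopfAlgebra ℂ H] [StarRing H] [StarModule ℂ H]
    [Ring B] [Algebra ℂ B] [StarRing B] [StarModule ℂ B]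
    [AddCommGroup M] [Module ℂ M] [StarAddMonoid M] [StarModule ℂ M]
    (hH : IsHopfStar ℂ H)
    (ρ : RightHopfModuleStarAlgebra ℂ H B)
    (S : EquivStarBimodule ℂ H B M ρ) :
    IsLazySweedlerCocycle S convOne ∧
    (∀ σ τ : H →ₗ[ℂ] B, IsLazySweedlerCocycle S σ → IsLazySweedlerCocycle S τ →
      IsLazySweedlerCocycle S (conv σ τ)) ∧
    (∀ σ τ υ : H →ₗ[ℂ] B, IsLazySweedlerCocycle S σ → IsLazySweedlerCocycle S τ →
      IsLazySweedlerCocycle S υ → conv (conv σ τ) υ = conv σ (conv τ υ)) ∧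
    (∀ σ : H →ₗ[ℂ] B, IsLazySweedlerCocycle S σ →
      ∃ τ : H →ₗ[ℂ] B, IsLazySweedlerCocycle S τ ∧
        conv σ τ = convOne ∧ conv τ σ = convOne) :=
  ⟨isLazySweedlerCocycle_convOne hH, fun _ _ hσ hτ => hσ.conv hH hτ,
    fun σ τ υ _ _ _ => conv_assoc σ τ υ, fun σ hσ => ⟨convStar σ, hσ.convStar hH, hσ.1, hσ.2.1⟩⟩
end

section
/- Let H be a Hopf *-algebra, B a right H-module *-algebra, M a right H-equivariant B-*-bimodule, and ∂ : B → M an H-equivariant *-derivation. For every unitary υ ∈ U(Cent_B(B⊕M)), MC[∂](Dυ) = D(−∂(υ)·υ*), where on the left D is the Sweedler coboundary Dυ(h) = (υ◁h)·υ* and on the right D is the Hochschild coboundary D(m)(h) = m◁h − ε(h)m. In particular −∂(υ)·υ* lies in Z_B(M)_sa. -/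
open TensorProduct

section AuxStmt12

variable {k H B M : Type*} [CommRing k] [StarRing k]
  [Ring H] [HopfAlgebra k H] [StarRing H] [StarModule k H]
  [Ring B] [Algebra k B] [StarRing B] [StarModule k B]
  [AddCommGroup M] [Module k M] [StarAddMonoid M] [StarModule k M]
  {ρ : RightHopfModuleStarAlgebra k H B}

lemma aux_star_ract (S : EquivStarBimodule k H B M ρ) (m : M) (b : B) :
    star (S.ract m b) = S.lact (star b) (star m) := by
  have h := S.star_compat 1 m b
  simpa [S.lact_one, S.ract_one] using h

lemma aux_der_one (S : EquivStarBimodule k H B M ρ) {der : B →ₗ[k] M}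
    (hder : IsEquivStarDerivation S der) : der 1 = 0 := by
  have h := hder.1 1 1
  rw [one_mul, S.ract_one, S.lact_one] at h
  have h2 : der 1 + der 1 = der 1 + 0 := by rw [add_zero, ← h]
  exact add_left_cancel h2

lemma aux_central_der (S : EquivStarBimodule k H B M ρ) {der : B →ₗ[k] M}
    (hder : IsEquivStarDerivation S der) {w : B}
    (hcomm : ∀ b : B, w * b = b * w) (hcent : ∀ m : M, S.lact w m = S.ract m w)
    (b : B) : S.lact b (der w) = S.ract (der w) b := by
  have h1 : der (w * b) = der (b * w) := by rw [hcomm b]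
  rw [hder.1, hder.1, hcent (der b)] at h1
  rw [add_comm (S.ract (der b) w)] at h1
  exact (add_right_cancel h1).symm

lemma aux_central_star (S : EquivStarBimodule k H B M ρ) {υ : B}
    (hυ : IsCentralUnitary S υ) : IsCentralUnitary S (star υ) := by
  obtain ⟨h1, h2, h3, h4⟩ := hυ
  have e : ∀ m : M, S.lact υ (S.ract m (star υ)) = m := by
    intro m
    rw [h4, ← S.ract_mul, h2, S.ract_one]
  refine ⟨by simpa using h2, by simpa using h1, fun b => ?_, fun m => ?_⟩
  · have := congrArg star (h3 (star b))
    simpa [star_mul] using this.symm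
  · conv_lhs => rw [← e m]
    rw [← S.lact_mul, h2, S.lact_one]

lemma aux_convStar_sweedler (hH : IsHopfStar k H) (S : EquivStarBimodule k H B M ρ)
    {υ : B} (hυ : IsCentralUnitary S υ) :
    convStar (M := B) (sweedlerCobound ρ υ) = LinearMap.mulLeft k υ ∘ₗ ρ.act (star υ) := by
  apply LinearMap.ext; intro h
  have key : star (HopfAlgebra.antipode (R := k)
      (star (HopfAlgebra.antipode (R := k) h))) = h := by
    have t := hH.2.2 (star h)
    rw [star_star] at t
    rw [t, star_star]
  simp only [convStar, sweedlerCobound, LinearMap.coe_mk, AddHom.coe_mk,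
    LinearMap.comp_apply, LinearMap.mulRight_apply, LinearMap.mulLeft_apply,
    star_mul, star_star, ρ.act_star, key]

end AuxStmt12

/-- Let `H` be a Hopf `*`-algebra, `B` a right `H`-module `*`-algebra,
`M` a right `H`-equivariant `B`-`*`-bimodule, and `der : B → M` an `H`-equivariant
`*`-derivation.  For every unitary `υ ∈ U(Cent_B(B ⊕ M))`,
`MC[der](Dυ) = D(-der(υ) • υ*)`, where on the left `D` is the Sweedler coboundary and on
the right `D` is the Hochschild coboundary; in particular `-der(υ) • υ*` lies in
`Z_B(M)_sa`. -/
theorem stmt12 {H B M : Type*}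
    [Ring H] [HopfAlgebra ℂ H] [StarRing H] [StarModule ℂ H]
    [Ring B] [Algebra ℂ B] [StarRing B] [StarModule ℂ B]
    [AddCommGroup M] [Module ℂ M] [StarAddMonoid M] [StarModule ℂ M]
    (hH : IsHopfStar ℂ H)
    (ρ : RightHopfModuleStarAlgebra ℂ H B)
    (S : EquivStarBimodule ℂ H B M ρ)
    (der : B →ₗ[ℂ] M) (hder : IsEquivStarDerivation S der)
    (υ : B) (hυ : IsCentralUnitary S υ) :
    star (-(S.ract (der υ) (star υ))) = -(S.ract (der υ) (star υ)) ∧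
    (∀ b : B, S.lact b (-(S.ract (der υ) (star υ))) = S.ract (-(S.ract (der υ) (star υ))) b) ∧
    mcCocycle S der (sweedlerCobound ρ υ) = hochCobound S (-(S.ract (der υ) (star υ))) := by
  set x := S.ract (der υ) (star υ) with hx
  obtain ⟨hu1, hu2, hcomm, hcent⟩ := hυ
  have hustar := aux_central_star S ⟨hu1, hu2, hcomm, hcent⟩
  obtain ⟨hs1, hs2, hscomm, hscent⟩ := hustar
  -- der of the two central unitaries are B-central
  have hcder : ∀ b : B, S.lact b (der υ) = S.ract (der υ) b :=
    aux_central_der S hder hcomm hcent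
  have hcders : ∀ b : B, S.lact b (der (star υ)) = S.ract (der (star υ)) b :=
    aux_central_der S hder hscomm hscent
  -- key identity: ract (der (star υ)) υ = -x  (= m)
  have h0 : x + S.lact υ (der (star υ)) = 0 := by
    have := hder.1 υ (star υ)
    rw [hu1, aux_der_one S hder] at this
    exact this.symm
  have hm : S.lact υ (der (star υ)) = -x := eq_neg_of_add_eq_zero_right h0
  have hm' : S.ract (der (star υ)) υ = -x := by rw [← hcent, hm]
  refine ⟨?_, ?_, ?_⟩
  · -- self-adjointness
    rw [star_neg, aux_star_ract, star_star]
    have : star (der υ) = -der (star υ) := by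
      have := hder.2.1 υ
      rw [this, neg_neg]
    rw [this, map_neg, hm, neg_neg]
  · -- centrality
    intro b
    rw [map_neg, map_neg, LinearMap.neg_apply]
    congr 1
    rw [hx, ← S.middle, hcder b, ← S.ract_mul, ← S.ract_mul]
    congr 1
    exact (hscomm b).symm
  · -- the cocycle identity
    set σ := sweedlerCobound ρ υ with hσ
    have hτ : convStar (M := B) σ = LinearMap.mulLeft ℂ υ ∘ₗ ρ.act (star υ) :=
      aux_convStar_sweedler hH S ⟨hu1, hu2, hcomm, hcent⟩
    set A₁ : H →ₗ[ℂ] M := S.ract.flip (star υ) ∘ₗ S.hact (der υ) with hA₁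
    set A₂ : H →ₗ[ℂ] M := S.lact.flip (der (star υ)) ∘ₗ ρ.act υ with hA₂
    have hd : der ∘ₗ σ = A₁ + A₂ := by
      apply LinearMap.ext; intro h
      simp only [hσ, sweedlerCobound, LinearMap.comp_apply, LinearMap.mulRight_apply,
        LinearMap.add_apply, hA₁, hA₂, LinearMap.flip_apply]
      rw [hder.1, hder.2.2]
    set τ : H →ₗ[ℂ] B := LinearMap.mulLeft ℂ υ ∘ₗ ρ.act (star υ) with hτ'
    have e1 : TensorProduct.lift S.ract ∘ₗ TensorProduct.map A₁ τ =
        TensorProduct.lift S.ract ∘ₗ TensorProduct.map (S.hact (der υ)) (ρ.act (star υ)) := by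
      apply TensorProduct.ext'; intro a b
      simp only [LinearMap.comp_apply, TensorProduct.map_tmul, TensorProduct.lift.tmul,
        hA₁, hτ', LinearMap.flip_apply, LinearMap.mulLeft_apply]
      rw [← S.ract_mul, ← mul_assoc, hu2, one_mul]
    have e2 : TensorProduct.lift S.ract ∘ₗ TensorProduct.map A₂ τ =
        S.ract (der (star υ)) ∘ₗ LinearMap.mulLeft ℂ υ ∘ₗ LinearMap.mul' ℂ B ∘ₗ
          TensorProduct.map (ρ.act υ) (ρ.act (star υ)) := by
      apply TensorProduct.ext'; intro a b
      simp only [LinearMap.comp_apply, TensorProduct.map_tmul, TensorProduct.lift.tmul,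
        hA₂, hτ', LinearMap.flip_apply, LinearMap.mulLeft_apply, LinearMap.mul'_apply]
      rw [hcders (ρ.act υ a), ← S.ract_mul]
      congr 1
      rw [← mul_assoc, ← hcomm (ρ.act υ a), mul_assoc]
    apply LinearMap.ext; intro h
    have step1 : TensorProduct.lift S.ract
        ((TensorProduct.map A₁ τ) (Coalgebra.comul (R := ℂ) h)) = S.hact x h := by
      have := LinearMap.congr_fun e1 (Coalgebra.comul (R := ℂ) h)
      simp only [LinearMap.comp_apply] at this
      rw [this]
      have := LinearMap.congr_fun (S.hact_ract (der υ) (star υ)) h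
      simp only [LinearMap.comp_apply] at this
      exact this.symm
    have step2 : TensorProduct.lift S.ract
        ((TensorProduct.map A₂ τ) (Coalgebra.comul (R := ℂ) h)) =
        Coalgebra.counit (R := ℂ) h • (-x) := by
      have := LinearMap.congr_fun e2 (Coalgebra.comul (R := ℂ) h)
      simp only [LinearMap.comp_apply] at this
      rw [this]
      have hmul := LinearMap.congr_fun (ρ.act_algebra_mul υ (star υ)) h
      simp only [LinearMap.comp_apply] at hmul
      rw [← hmul, hu1]
      have hone := LinearMap.congr_fun ρ.act_algebra_one h
      simp only [LinearMap.comp_apply, Algebra.linearMap_apply] at hone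
      rw [hone, Algebra.algebraMap_eq_smul_one, LinearMap.mulLeft_apply,
        mul_smul_comm, mul_one, map_smul, hm']
    have expand : mcCocycle S der σ h =
        -(TensorProduct.lift S.ract
            ((TensorProduct.map A₁ τ) (Coalgebra.comul (R := ℂ) h)) +
          TensorProduct.lift S.ract
            ((TensorProduct.map A₂ τ) (Coalgebra.comul (R := ℂ) h))) := by
      simp only [mcCocycle, LinearMap.neg_apply, LinearMap.comp_apply, hd, hτ,
        TensorProduct.map_add_left, LinearMap.add_apply, map_add]
    rw [expand, step1, step2]
    simp only [hochCobound, LinearMap.sub_apply, LinearMap.smulRight_apply, map_neg,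
      LinearMap.neg_apply, smul_neg, neg_add_rev, neg_neg]
    abel
end
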